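/- For every δ > 0 there exist constants C₁ > 0 and C₂ > 0 such that for all integers N ≥ 2, P_sync(δ/N, N) ≤ C₁ e^{−C₂ N}; that is, in the classical 1/N coupling scaling the probability of full synchrony decays exponentially fast in N. -/

import Mathlib

open Real Matrix Finset MeasureTheory ProbabilityTheory

/-- The Kuramoto interaction vector field `f_i(θ) = Σ_j sin (θ_j - θ_i)`. -/
noncomputable def kuraF (N : ℕ) (θ : Fin N → ℝ) : Fin N → ℝ :=
  fun i => ∑ j, Real.sin (θ j - θ i)

/-- The Jacobian `J(θ)`: `J_ij = cos (θ_i - θ_j)` off the diagonal and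
`J_ii = -Σ_{k ≠ i} cos (θ_k - θ_i)`. -/
noncomputable def Jmat (N : ℕ) (θ : Fin N → ℝ) : Matrix (Fin N) (Fin N) ℝ :=
  Matrix.of fun i j =>
    if i = j then -∑ k ∈ Finset.univ \ {i}, Real.cos (θ k - θ i)
    else Real.cos (θ i - θ j)

/-- The set of frequency samples `ω` for which the (mean-adjusted) Kuramoto system with
coupling `γ` has a stable fully synchronized solution: some `θ` with
`ω_i - (1/N) Σ_j ω_j + γ f_i(θ) = 0` for all `i` and `J(θ)` negative semidefinite with
one-dimensional kernel. -/
def syncSet (N : ℕ) (γ : ℝ) : Set (Fin N → ℝ) :=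
  {ω | ∃ θ : Fin N → ℝ,
    (∀ i, ω i - (∑ j, ω j) / N + γ * kuraF N θ i = 0) ∧
    (-(Jmat N θ)).PosSemidef ∧
    Module.finrank ℝ (LinearMap.ker (Matrix.toLin' (Jmat N θ))) = 1}

/-- `P_sync(γ, N)`: the probability, for `ω` a vector of `N` i.i.d. standard Gaussian
random variables, that the Kuramoto system with coupling `γ` fully synchronizes. -/
noncomputable def Psync (γ : ℝ) (N : ℕ) : ℝ :=
  ((Measure.pi fun _ : Fin N => gaussianReal 0 1) (syncSet N γ)).toReal

/-- The error function `erf x = (2/√π) ∫_0^x e^{-t²} dt`. -/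
noncomputable def erf (x : ℝ) : ℝ :=
  (2 / Real.sqrt Real.pi) * ∫ t in (0 : ℝ)..x, Real.exp (-t ^ 2)

open scoped ENNReal NNReal

/-!
A synchronized state forces every `ω_i` to lie within `|γ| N` of the mean, since `|f_i| ≤ N`.
With `γ = δ / N` all the `ω_i` therefore lie in one interval of fixed width `4|δ|` around `ω_0`.
Conditionally on `ω_0`, each of the other `N - 1` independent coordinates lands there with
probability at most some `q < 1` not depending on `ω_0`, because such an interval misses one of
the two rays `(-∞, -2|δ|)`, `(2|δ|, ∞)`, both of positive Gaussian mass. Hence `P_sync(δ/N, N) ≤ q^(N-1)`.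
-/

lemma abs_kuraF_le (N : ℕ) (θ : Fin N → ℝ) (i : Fin N) : |kuraF N θ i| ≤ N := by
  calc |kuraF N θ i| ≤ ∑ j : Fin N, |Real.sin (θ j - θ i)| := abs_sum_le_sum_abs _ _
    _ ≤ ∑ _j : Fin N, (1 : ℝ) := sum_le_sum fun j _ => abs_sin_le_one _
    _ = N := by simp

lemma abs_sub_mean_le_of_mem_syncSet {N : ℕ} {γ : ℝ} {ω : Fin N → ℝ} (hω : ω ∈ syncSet N γ)
    (i : Fin N) : |ω i - (∑ j, ω j) / N| ≤ |γ| * N := by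
  obtain ⟨θ, hθ, -, -⟩ := hω
  rw [show ω i - (∑ j, ω j) / N = -(γ * kuraF N θ i) by linarith [hθ i], abs_neg, abs_mul]
  exact mul_le_mul_of_nonneg_left (abs_kuraF_le N θ i) (abs_nonneg γ)

lemma syncSet_div_subset {n : ℕ} (δ : ℝ) :
    syncSet (n + 1) (δ / (n + 1 : ℕ)) ⊆ {ω | ∀ i, |ω i - ω 0| ≤ 2 * |δ|} := by
  intro ω hω i
  set m := (∑ j, ω j) / (n + 1 : ℕ)
  have hN : (0 : ℝ) < (n + 1 : ℕ) := by positivity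
  have hmean : ∀ k, |ω k - m| ≤ |δ| := fun k => by
    have := abs_sub_mean_le_of_mem_syncSet hω k
    rwa [abs_div, abs_of_pos hN, div_mul_cancel₀ _ hN.ne'] at this
  calc |ω i - ω 0| ≤ |ω i - m| + |m - ω 0| := abs_sub_le _ _ _
    _ ≤ 2 * |δ| := by linarith [hmean i, hmean 0, abs_sub_comm m (ω 0)]

lemma measure_Icc_le_one_sub_min (ν : Measure ℝ) [IsProbabilityMeasure ν] (c x : ℝ) :
    ν (Set.Icc (x - c) (x + c)) ≤ 1 - min (ν (Set.Iio (-c))) (ν (Set.Ioi c)) := by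
  rcases le_total 0 x with hx | hx
  · have hsub : Set.Icc (x - c) (x + c) ⊆ (Set.Iio (-c))ᶜ := fun t ht => by
      simp only [Set.mem_compl_iff, Set.mem_Iio, not_lt]; linarith [ht.1]
    calc ν (Set.Icc (x - c) (x + c)) ≤ ν (Set.Iio (-c))ᶜ := measure_mono hsub
      _ = 1 - ν (Set.Iio (-c)) := prob_compl_eq_one_sub measurableSet_Iio
      _ ≤ _ := tsub_le_tsub_left (min_le_left _ _) 1
  · have hsub : Set.Icc (x - c) (x + c) ⊆ (Set.Ioi c)ᶜ := fun t ht => by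
      simp only [Set.mem_compl_iff, Set.mem_Ioi, not_lt]; linarith [ht.2]
    calc ν (Set.Icc (x - c) (x + c)) ≤ ν (Set.Ioi c)ᶜ := measure_mono hsub
      _ = 1 - ν (Set.Ioi c) := prob_compl_eq_one_sub measurableSet_Ioi
      _ ≤ _ := tsub_le_tsub_left (min_le_right _ _) 1

lemma gaussianReal_ne_zero_of_isOpen (μ : ℝ) {v : ℝ≥0} (hv : v ≠ 0) {s : Set ℝ} (hs : IsOpen s)
    (hne : s.Nonempty) : gaussianReal μ v s ≠ 0 :=
  mt (fun h => gaussianReal_absolutelyContinuous' μ hv h) (hs.measure_ne_zero volume hne)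

lemma measure_pi_setOf_abs_sub_le (ν : Measure ℝ) [IsProbabilityMeasure ν] (n : ℕ) (c : ℝ)
    {q : ℝ≥0∞} (hq : ∀ x, ν (Set.Icc (x - c) (x + c)) ≤ q) :
    Measure.pi (fun _ : Fin (n + 1) => ν) {ω | ∀ i, |ω i - ω 0| ≤ c} ≤ q ^ n := by
  set A : Set (ℝ × (Fin n → ℝ)) := {p | ∀ j, |p.2 j - p.1| ≤ c}
  have hA : MeasurableSet A := by
    simp only [A, Set.ofPred_forall]
    exact MeasurableSet.iInter fun j => measurableSet_le (by fun_prop) measurable_const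
  have hsub : {ω : Fin (n + 1) → ℝ | ∀ i, |ω i - ω 0| ≤ c} ⊆
      MeasurableEquiv.piFinSuccAbove (fun _ => ℝ) 0 ⁻¹' A := fun ω hω j => hω _
  have hsection : ∀ x, Prod.mk x ⁻¹' A = Set.univ.pi fun _ => Set.Icc (x - c) (x + c) := by
    intro x
    ext y
    simp only [A, Set.mem_preimage, Set.mem_ofPred_eq, Set.mem_univ_pi]
    exact forall_congr' fun j => by rw [abs_sub_comm]; exact Set.mem_Icc_iff_abs_le
  calc Measure.pi (fun _ => ν) {ω : Fin (n + 1) → ℝ | ∀ i, |ω i - ω 0| ≤ c}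
      ≤ Measure.pi (fun _ => ν) (MeasurableEquiv.piFinSuccAbove (fun _ => ℝ) 0 ⁻¹' A) :=
        measure_mono hsub
    _ = (ν.prod (Measure.pi fun _ : Fin n => ν)) A :=
        (measurePreserving_piFinSuccAbove (fun _ => ν) 0).measure_preimage hA.nullMeasurableSet
    _ = ∫⁻ x, Measure.pi (fun _ : Fin n => ν) (Prod.mk x ⁻¹' A) ∂ν := Measure.prod_apply hA
    _ ≤ ∫⁻ _, q ^ n ∂ν := lintegral_mono fun x => by
        rw [hsection x, Measure.pi_pi]
        exact (prod_le_prod' fun j _ => hq x).trans_eq (by simp)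
    _ = q ^ n := by simp

lemma exists_pow_le_mul_exp {r : ℝ} (hr0 : 0 ≤ r) (hr1 : r < 1) :
    ∃ C₁ > (0 : ℝ), ∃ C₂ > (0 : ℝ), ∀ n : ℕ, r ^ n ≤ C₁ * exp (-C₂ * (n + 1 : ℕ)) := by
  set b := max r (exp (-1))
  have hb0 : 0 < b := (exp_pos _).trans_le (le_max_right _ _)
  have hlogb : log b < 0 := log_neg hb0 (max_lt hr1 (exp_lt_one_iff.mpr (by norm_num)))
  refine ⟨exp (-log b), exp_pos _, -log b, neg_pos.mpr hlogb, fun n => ?_⟩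
  calc r ^ n ≤ b ^ n := pow_le_pow_left₀ hr0 (le_max_left _ _) n
    _ = exp (-log b) * exp (-(-log b) * (n + 1 : ℕ)) := by
        rw [← exp_log hb0, ← exp_nat_mul, log_exp, ← exp_add]
        push_cast
        ring_nf

theorem stmt19_general (δ : ℝ) :
    ∃ C₁ > (0 : ℝ), ∃ C₂ > (0 : ℝ), ∀ N : ℕ, 2 ≤ N →
      Psync (δ / N) N ≤ C₁ * Real.exp (-C₂ * N) := by
  set ν := gaussianReal 0 1
  set q := 1 - min (ν (Set.Iio (-(2 * |δ|)))) (ν (Set.Ioi (2 * |δ|)))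
  have hq : q < 1 := ENNReal.sub_lt_self ENNReal.one_ne_top one_ne_zero <| ne_of_gt <| lt_min
    (pos_iff_ne_zero.2 <| gaussianReal_ne_zero_of_isOpen 0 one_ne_zero isOpen_Iio Set.nonempty_Iio)
    (pos_iff_ne_zero.2 <| gaussianReal_ne_zero_of_isOpen 0 one_ne_zero isOpen_Ioi Set.nonempty_Ioi)
  have hqtop : q ≠ ⊤ := (hq.trans ENNReal.one_lt_top).ne
  obtain ⟨C₁, hC₁, C₂, hC₂, hexp⟩ := exists_pow_le_mul_exp ENNReal.toReal_nonneg
    (ENNReal.toReal_lt_of_lt_ofReal (by simpa using hq))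
  refine ⟨C₁, hC₁, C₂, hC₂, fun N hN => ?_⟩
  obtain ⟨n, rfl⟩ : ∃ n, N = n + 1 := ⟨N - 1, by omega⟩
  have hmeas : Measure.pi (fun _ => ν) (syncSet (n + 1) (δ / (n + 1 : ℕ))) ≤ q ^ n :=
    (measure_mono (syncSet_div_subset δ)).trans <|
      measure_pi_setOf_abs_sub_le ν n _ (measure_Icc_le_one_sub_min ν _)
  calc Psync (δ / (n + 1 : ℕ)) (n + 1) ≤ (q ^ n).toReal :=
        ENNReal.toReal_mono (ENNReal.pow_ne_top hqtop) hmeas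
    _ = q.toReal ^ n := ENNReal.toReal_pow _ _
    _ ≤ _ := hexp n

theorem stmt19 (δ : ℝ) (hδ : 0 < δ) :
    ∃ C₁ > (0 : ℝ), ∃ C₂ > (0 : ℝ), ∀ N : ℕ, 2 ≤ N →
      Psync (δ / N) N ≤ C₁ * Real.exp (-C₂ * N) :=
  stmt19_general δ
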